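/- arXiv:1206.0271 — 3 statements merged into one kernel-verified Lean document; each statement's English description precedes it below -/
import Mathlib

section
/- If g(m) denotes the value 6,6,5,4,3,2,1 according as m ≡ 1,2,3,4,5,6,7 (mod 8), then for every positive integer m with m ≢ 0 (mod 8), the binomial coefficient C(m + g(m) - 1, g(m)) is odd. -/
/-- The function `g(m)` taking the values 6,6,5,4,3,2,1 according as
`m ≡ 1,2,3,4,5,6,7 (mod 8)`. -/
def gVal (m : ℕ) : ℕ :=
  if m % 8 = 1 then 6
  else if m % 8 = 2 then 6
  else if m % 8 = 3 then 5
  else if m % 8 = 4 then 4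
  else if m % 8 = 5 then 3
  else if m % 8 = 6 then 2
  else 1

private lemma lucas_step (n k : ℕ) :
    Nat.choose n k % 2 = (Nat.choose (n % 2) (k % 2) * Nat.choose (n / 2) (k / 2)) % 2 :=
  Choose.choose_modEq_choose_mod_mul_choose_div_nat (p := 2)

private lemma choose_one_of_le (b : ℕ) (hb : b ≤ 1) : Nat.choose 1 b = 1 := by
  interval_cases b <;> rfl

/-- `C(2a+1, t)` is odd for `t < 2`. -/
private lemma odd_D (a t : ℕ) (ht : t < 2) : Nat.choose (2 * a + 1) t % 2 = 1 := by
  have e1 : (2 * a + 1) % 2 = 1 := by omega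
  have e2 : (2 * a + 1) / 2 = a := by omega
  have e3 : t % 2 = t := by omega
  have e4 : t / 2 = 0 := by omega
  have h1 := lucas_step (2 * a + 1) t
  rw [e1, e2, e3, e4, Nat.choose_zero_right, choose_one_of_le t (by omega)] at h1
  simpa using h1

/-- `C(4a+3, t)` is odd for `t < 4`. -/
private lemma odd_C (a t : ℕ) (ht : t < 4) : Nat.choose (4 * a + 3) t % 2 = 1 := by
  have e1 : (4 * a + 3) % 2 = 1 := by omega
  have e2 : (4 * a + 3) / 2 = 2 * a + 1 := by omega
  have h1 := lucas_step (4 * a + 3) t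
  rw [e1, e2, choose_one_of_le (t % 2) (by omega)] at h1
  have h2 := odd_D a (t / 2) (by omega)
  simp only [one_mul] at h1
  omega

/-- `C(8q+7, t)` is odd for `t < 8`. -/
private lemma odd_A (q t : ℕ) (ht : t < 8) : Nat.choose (8 * q + 7) t % 2 = 1 := by
  have e1 : (8 * q + 7) % 2 = 1 := by omega
  have e2 : (8 * q + 7) / 2 = 4 * q + 3 := by omega
  have h1 := lucas_step (8 * q + 7) t
  rw [e1, e2, choose_one_of_le (t % 2) (by omega)] at h1
  have h2 := odd_C q (t / 2) (by omega)
  simp only [one_mul] at h1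
  omega

/-- `C(8q+6, 6)` is odd. -/
private lemma odd_B (q : ℕ) : Nat.choose (8 * q + 6) 6 % 2 = 1 := by
  have e1 : (8 * q + 6) % 2 = 0 := by omega
  have e2 : (8 * q + 6) / 2 = 4 * q + 3 := by omega
  have h1 := lucas_step (8 * q + 6) 6
  rw [e1, e2] at h1
  norm_num at h1
  have h2 := odd_C q 3 (by norm_num)
  omega

/-- For every positive integer `m` with `m ≢ 0 (mod 8)`, the binomial coefficient
`C(m + g(m) - 1, g(m))` is odd. -/
theorem stmt0 (m : ℕ) (hm : 0 < m) (h8 : m % 8 ≠ 0) :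
    Odd (Nat.choose (m + gVal m - 1) (gVal m)) := by
  have hq := Nat.div_add_mod m 8
  set q := m / 8 with hqdef
  set r := m % 8 with hrdef
  rw [Nat.odd_iff]
  have hrlt : r < 8 := Nat.mod_lt _ (by norm_num)
  interval_cases r
  · omega
  · have hg : gVal m = 6 := by simp [gVal, ← hrdef]
    have hn : m + gVal m - 1 = 8 * q + 6 := by omega
    rw [hg] at hn ⊢; rw [hn]; exact odd_B q
  · have hg : gVal m = 6 := by simp [gVal, ← hrdef]
    have hn : m + gVal m - 1 = 8 * q + 7 := by omega
    rw [hg] at hn ⊢; rw [hn]; exact odd_A q 6 (by norm_num)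
  · have hg : gVal m = 5 := by simp [gVal, ← hrdef]
    have hn : m + gVal m - 1 = 8 * q + 7 := by omega
    rw [hg] at hn ⊢; rw [hn]; exact odd_A q 5 (by norm_num)
  · have hg : gVal m = 4 := by simp [gVal, ← hrdef]
    have hn : m + gVal m - 1 = 8 * q + 7 := by omega
    rw [hg] at hn ⊢; rw [hn]; exact odd_A q 4 (by norm_num)
  · have hg : gVal m = 3 := by simp [gVal, ← hrdef]
    have hn : m + gVal m - 1 = 8 * q + 7 := by omega
    rw [hg] at hn ⊢; rw [hn]; exact odd_A q 3 (by norm_num)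
  · have hg : gVal m = 2 := by simp [gVal, ← hrdef]
    have hn : m + gVal m - 1 = 8 * q + 7 := by omega
    rw [hg] at hn ⊢; rw [hn]; exact odd_A q 2 (by norm_num)
  · have hg : gVal m = 1 := by simp [gVal, ← hrdef]
    have hn : m + gVal m - 1 = 8 * q + 7 := by omega
    rw [hg] at hn ⊢; rw [hn]; exact odd_A q 1 (by norm_num)
end

section
/- There exists a Hopf-type map P_{n̄} × P^{|n̄|+r-1} → P^{M+r-1} if and only if there exists an axial map P^{n₁} × P^{|n̄|+r-1} → P^{M+r-1}. -/
noncomputable section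

open unitInterval Set

/-- The double evaluation map `X^{[0,1]} → X × X`, sending a path `γ : [0,1] → X`
to the pair of its endpoints `(γ(0), γ(1))`. -/
def pathEval (X : Type*) [TopologicalSpace X] (γ : C(I, X)) : X × X := (γ 0, γ 1)

/-- `X × X` admits a cover by `k + 1` open sets on each of which the double evaluation
map `X^{[0,1]} → X × X` admits a continuous section. -/
def TCCover (X : Type*) [TopologicalSpace X] (k : ℕ) : Prop :=
  ∃ U : Fin (k + 1) → Set (X × X),
    (∀ i, IsOpen (U i)) ∧ (⋃ i, U i) = Set.univ ∧
    ∀ i, ∃ s : C(U i, C(I, X)), ∀ u : U i, pathEval X (s u) = (u : X × X)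

/-- Farber's (reduced) topological complexity, as an element of `ℕ∞`. -/
def topComplexity (X : Type*) [TopologicalSpace X] : ℕ∞ :=
  sInf {c : ℕ∞ | ∃ k : ℕ, TCCover X k ∧ c = k}

/-- `X × X` admits a cover by `k + 1` `G`-invariant open sets (for the diagonal `G`-action)
on each of which the double evaluation map admits a continuous `G`-equivariant section. -/
def EqTCCover (G X : Type*) [Group G] [TopologicalSpace X] [MulAction G X] (k : ℕ) : Prop :=
  ∃ U : Fin (k + 1) → Set (X × X),
    (∀ i, IsOpen (U i)) ∧ (⋃ i, U i) = Set.univ ∧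
    (∀ i (g : G) p, p ∈ U i → g • p ∈ U i) ∧
    ∀ i, ∃ s : C(U i, C(I, X)),
      (∀ u : U i, pathEval X (s u) = (u : X × X)) ∧
      ∀ (g : G) (u : U i) (hg : g • (u : X × X) ∈ U i) (t : I),
        (s ⟨g • (u : X × X), hg⟩) t = g • (s u) t

/-- The (reduced) equivariant topological complexity `TC_G(X)` of Colman–Grant,
as an element of `ℕ∞`. -/
def eqTC (G X : Type*) [Group G] [TopologicalSpace X] [MulAction G X] : ℕ∞ :=
  sInf {c : ℕ∞ | ∃ k : ℕ, EqTCCover G X k ∧ c = k}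

open Metric

/-- `S_{n̄} = S^{n₁} × ⋯ × S^{n_r}`, the product of unit spheres. -/
abbrev SphereProd {r : ℕ} (n : Fin r → ℕ) : Type :=
  Π i : Fin r, Metric.sphere (0 : EuclideanSpace ℝ (Fin (n i + 1))) 1

/-- The setoid on `S_{n̄}` identifying each point with its image under the diagonal
antipodal involution. -/
def ppsSetoid {r : ℕ} (n : Fin r → ℕ) : Setoid (SphereProd n) :=
  ⟨fun x y => y = x ∨ y = -x, by
    constructor
    · intro x; exact Or.inl rfl
    · rintro x y (rfl | rfl)
      · exact Or.inl rfl
      · right; simp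
    · rintro x y z (rfl | rfl) (rfl | rfl)
      · exact Or.inl rfl
      · exact Or.inr rfl
      · exact Or.inr rfl
      · left; simp⟩

/-- Davis' projective product space `P_{n̄}`: the quotient of `S_{n̄}` by the diagonal
(free) antipodal `ℤ/2`-action. -/
def PPS {r : ℕ} (n : Fin r → ℕ) : Type := Quotient (ppsSetoid n)

instance {r : ℕ} (n : Fin r → ℕ) : TopologicalSpace (PPS n) :=
  instTopologicalSpaceQuotient

/-- The quotient map `S_{n̄} → P_{n̄}`. -/
def ppsMk {r : ℕ} (n : Fin r → ℕ) : SphereProd n → PPS n := Quotient.mk _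

/-- The setoid on the sphere `Sᵏ` identifying antipodal points. -/
def rpSetoid (k : ℕ) : Setoid (Metric.sphere (0 : EuclideanSpace ℝ (Fin (k + 1))) 1) :=
  ⟨fun x y => y = x ∨ y = -x, by
    constructor
    · intro x; exact Or.inl rfl
    · rintro x y (rfl | rfl)
      · exact Or.inl rfl
      · right; simp
    · rintro x y z (rfl | rfl) (rfl | rfl)
      · exact Or.inl rfl
      · exact Or.inr rfl
      · exact Or.inr rfl
      · left; simp⟩

/-- Real projective space `Pᵏ` as the quotient of the sphere `Sᵏ` by the antipodal map. -/
def RP (k : ℕ) : Type := Quotient (rpSetoid k)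

instance (k : ℕ) : TopologicalSpace (RP k) := instTopologicalSpaceQuotient

/-- The quotient map `Sᵏ → Pᵏ`. -/
def rpMk (k : ℕ) : Metric.sphere (0 : EuclideanSpace ℝ (Fin (k + 1))) 1 → RP k :=
  Quotient.mk _

/-- A continuous map `g : P_{n̄} × P_{m̄} → Pᵏ` is *axial* if it corresponds to the
cohomology class `x ⊗ 1 + 1 ⊗ x`; equivalently (and this is the formulation used here),
if it admits a continuous lift `g̃ : S_{n̄} × S_{m̄} → Sᵏ` which is `ℤ/2`-equivariant in
each variable separately: `g̃(-x, y) = g̃(x, -y) = -g̃(x, y)`. -/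
def IsAxialMap {r s : ℕ} (n : Fin r → ℕ) (m : Fin s → ℕ) (k : ℕ)
    (g : PPS n × PPS m → RP k) : Prop :=
  Continuous g ∧
  ∃ gt : SphereProd n × SphereProd m →
      Metric.sphere (0 : EuclideanSpace ℝ (Fin (k + 1))) 1,
    Continuous gt ∧
    (∀ x y, gt (-x, y) = -gt (x, y)) ∧
    (∀ x y, gt (x, -y) = -gt (x, y)) ∧
    (∀ x y, rpMk k (gt (x, y)) = g (ppsMk n x, ppsMk m y))

/-- A continuous map `α : P_{n̄} × P^{N} → P^{L}` is a *Hopf-type map* if it classifies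
the Hopf line bundle of the projectivization `P((N+1)ξ_{n̄}) = P_{n̄} × P^{N}`;
equivalently (the formulation used here), if it is double covered by a continuous map
`H : S_{n̄} × S^{N} → S^{L}` satisfying `H(-x, -v) = H(x, v)` (so that `H` descends to
the Borel construction `S_{n̄} ×_{ℤ/2} S^{N}`, the sphere bundle of the Hopf line
bundle) and `H(x, -v) = -H(x, v)` (equivariance with respect to the deck
transformations). -/
def IsHopfTypeMap {r : ℕ} (n : Fin r → ℕ) (N L : ℕ)
    (α : PPS n × RP N → RP L) : Prop :=
  Continuous α ∧
  ∃ H : SphereProd n × Metric.sphere (0 : EuclideanSpace ℝ (Fin (N + 1))) 1 →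
      Metric.sphere (0 : EuclideanSpace ℝ (Fin (L + 1))) 1,
    Continuous H ∧
    (∀ x v, H (-x, -v) = H (x, v)) ∧
    (∀ x v, H (x, -v) = -H (x, v)) ∧
    (∀ x v, rpMk L (H (x, v)) = α (ppsMk n x, rpMk N v))

/-- A continuous map `g : Pᵃ × Pᵇ → Pᵏ` of real projective spaces is *axial* if it
represents `x ⊗ 1 + 1 ⊗ x` in mod 2 cohomology; equivalently (the formulation used
here), if it lifts to a continuous map `g̃ : Sᵃ × Sᵇ → Sᵏ` which is `ℤ/2`-equivariant
in each variable separately. -/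
def IsAxialMapRP (a b k : ℕ) (g : RP a × RP b → RP k) : Prop :=
  Continuous g ∧
  ∃ gt : Metric.sphere (0 : EuclideanSpace ℝ (Fin (a + 1))) 1 ×
      Metric.sphere (0 : EuclideanSpace ℝ (Fin (b + 1))) 1 →
      Metric.sphere (0 : EuclideanSpace ℝ (Fin (k + 1))) 1,
    Continuous gt ∧
    (∀ x y, gt (-x, y) = -gt (x, y)) ∧
    (∀ x y, gt (x, -y) = -gt (x, y)) ∧
    (∀ x y, rpMk k (gt (x, y)) = g (rpMk a x, rpMk b y))



namespace Stmt15Aux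

/-- Padding a Euclidean vector with zeros. -/
def pad {a b : ℕ} (h : a ≤ b) (x : EuclideanSpace ℝ (Fin a)) : EuclideanSpace ℝ (Fin b) :=
  WithLp.toLp 2 fun j => if hj : (j : ℕ) < a then x ⟨j, hj⟩ else 0

lemma pad_neg {a b : ℕ} (h : a ≤ b) (x : EuclideanSpace ℝ (Fin a)) :
    pad h (-x) = -(pad h x) := by
  ext j
  simp only [pad, PiLp.neg_apply, PiLp.toLp_apply]
  split <;> simp

lemma continuous_pad {a b : ℕ} (h : a ≤ b) : Continuous (pad h) := by
  apply (PiLp.continuous_toLp 2 _).comp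
  apply continuous_pi
  intro j
  by_cases hj : (j : ℕ) < a
  · simpa only [pad, dif_pos hj, Function.comp_def] using (continuous_apply (⟨j, hj⟩ : Fin a)).comp
      (PiLp.continuous_ofLp 2 _)
  · simpa only [pad, dif_neg hj] using continuous_const

lemma norm_pad {a b : ℕ} (h : a ≤ b) (x : EuclideanSpace ℝ (Fin a)) :
    ‖pad h x‖ = ‖x‖ := by
  rw [EuclideanSpace.norm_eq, EuclideanSpace.norm_eq]
  congr 1
  have : ∑ j : Fin b, ‖pad h x j‖ ^ 2
      = ∑ j ∈ Finset.univ.map (Fin.castLEEmb h), ‖pad h x j‖ ^ 2 := by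
    refine (Finset.sum_subset (Finset.subset_univ _) ?_).symm
    intro j _ hj
    have hja : ¬ ((j : ℕ) < a) := by
      intro hlt
      exact hj (Finset.mem_map.mpr ⟨⟨(j : ℕ), hlt⟩, Finset.mem_univ _, by
        ext; simp [Fin.castLEEmb]⟩)
    simp [pad, dif_neg hja]
  rw [this, Finset.sum_map]
  refine Finset.sum_congr rfl fun i _ => ?_
  have hi : ((Fin.castLEEmb h i : Fin b) : ℕ) < a := by simp [Fin.castLEEmb]
  simp only [pad, PiLp.toLp_apply, dif_pos hi]
  congr 1

end Stmt15Aux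

namespace Stmt15Aux

/-- Padding as a map of unit spheres. -/
def padS {a b : ℕ} (h : a ≤ b) (x : sphere (0 : EuclideanSpace ℝ (Fin a)) 1) :
    sphere (0 : EuclideanSpace ℝ (Fin b)) 1 :=
  ⟨pad h x.1, by
    rw [mem_sphere_zero_iff_norm, norm_pad]
    exact mem_sphere_zero_iff_norm.mp x.2⟩

lemma padS_neg {a b : ℕ} (h : a ≤ b) (x : sphere (0 : EuclideanSpace ℝ (Fin a)) 1) :
    padS h (-x) = -(padS h x) := by
  apply Subtype.ext
  simp only [padS, coe_neg_sphere]
  exact pad_neg h x.1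

lemma continuous_padS {a b : ℕ} (h : a ≤ b) : Continuous (padS (a := a) (b := b) h) :=
  Continuous.subtype_mk ((continuous_pad h).comp continuous_subtype_val) _

lemma rpMk_neg (k : ℕ) (x : sphere (0 : EuclideanSpace ℝ (Fin (k + 1))) 1) :
    rpMk k (-x) = rpMk k x :=
  Quotient.sound (Or.inr (neg_neg x).symm)

lemma isOpenQuotientMap_rpMk (k : ℕ) : IsOpenQuotientMap (rpMk k) := by
  refine ⟨fun q => q.exists_rep, continuous_quotient_mk', fun U hU => ?_⟩
  have key : rpMk k ⁻¹' (rpMk k '' U) = U ∪ (fun x => -x) ⁻¹' U := by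
    ext z
    constructor
    · rintro ⟨u, hu, huz⟩
      rcases Quotient.exact huz with h | h
      · exact Or.inl (h ▸ hu)
      · right; show -z ∈ U; rw [h, neg_neg]; exact hu
    · rintro (hz | hz)
      · exact ⟨z, hz, rfl⟩
      · exact ⟨-z, hz, Quotient.sound (Or.inr (neg_neg z).symm)⟩
  have : IsOpen (rpMk k ⁻¹' (rpMk k '' U)) := by
    rw [key]; exact hU.union (hU.preimage continuous_neg)
  exact this

lemma isOpenQuotientMap_ppsMk {r : ℕ} (n : Fin r → ℕ) : IsOpenQuotientMap (ppsMk n) := by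
  refine ⟨fun q => q.exists_rep, continuous_quotient_mk', fun U hU => ?_⟩
  have key : ppsMk n ⁻¹' (ppsMk n '' U) = U ∪ (fun x => -x) ⁻¹' U := by
    ext z
    constructor
    · rintro ⟨u, hu, huz⟩
      rcases Quotient.exact huz with h | h
      · exact Or.inl (h ▸ hu)
      · right; show -z ∈ U; rw [h, neg_neg]; exact hu
    · rintro (hz | hz)
      · exact ⟨z, hz, rfl⟩
      · exact ⟨-z, hz, Quotient.sound (Or.inr (neg_neg z).symm)⟩
  have : IsOpen (ppsMk n ⁻¹' (ppsMk n '' U)) := by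
    rw [key]; exact hU.union (hU.preimage continuous_neg)
  exact this

end Stmt15Aux

/-- There exists a Hopf-type map `P_{n̄} × P^{|n̄|+r-1} → P^{M+r-1}` if and only if
there exists an axial map `P^{n₁} × P^{|n̄|+r-1} → P^{M+r-1}`. -/
theorem stmt15 (r : ℕ) (hr : 0 < r) (n : Fin r → ℕ)
    (hpos : ∀ i, 1 ≤ n i) (hmono : Monotone n) (M : ℕ) :
    (∃ α : PPS n × RP ((∑ i, n i) + r - 1) → RP (M + r - 1),
        IsHopfTypeMap n ((∑ i, n i) + r - 1) (M + r - 1) α) ↔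
    (∃ g : RP (n ⟨0, hr⟩) × RP ((∑ i, n i) + r - 1) → RP (M + r - 1),
        IsAxialMapRP (n ⟨0, hr⟩) ((∑ i, n i) + r - 1) (M + r - 1) g) := by
  classical
  set i0 : Fin r := ⟨0, hr⟩ with hi0
  set N := (∑ i, n i) + r - 1
  set L := M + r - 1
  have hle : ∀ i : Fin r, n i0 + 1 ≤ n i + 1 := fun i =>
    Nat.succ_le_succ (hmono (by simp [hi0, Fin.le_def]))
  -- inclusion of spheres
  set jmap : sphere (0 : EuclideanSpace ℝ (Fin (n i0 + 1))) 1 → SphereProd n :=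
    fun x i => Stmt15Aux.padS (hle i) x with hjmap
  have hjcont : Continuous jmap :=
    continuous_pi fun i => Stmt15Aux.continuous_padS (hle i)
  have hjneg : ∀ x, jmap (-x) = -(jmap x) := by
    intro x; funext i; exact Stmt15Aux.padS_neg (hle i) x
  constructor
  · rintro ⟨α, hαc, H, hHc, hH1, hH2, hH3⟩
    -- sphere-level axial lift
    set gt : sphere (0 : EuclideanSpace ℝ (Fin (n i0 + 1))) 1 ×
        sphere (0 : EuclideanSpace ℝ (Fin (N + 1))) 1 →
        sphere (0 : EuclideanSpace ℝ (Fin (L + 1))) 1 :=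
      fun p => H (jmap p.1, p.2) with hgt
    have hgtc : Continuous gt := hHc.comp ((hjcont.comp continuous_fst).prodMk continuous_snd)
    have hgt1 : ∀ x y, gt (-x, y) = -gt (x, y) := by
      intro x y
      show H (jmap (-x), y) = -H (jmap x, y)
      rw [hjneg]
      calc H (-(jmap x), y) = H (-(jmap x), -(-y)) := by rw [neg_neg]
        _ = -H (-(jmap x), -y) := hH2 _ _
        _ = -H (jmap x, y) := by rw [hH1]
    have hgt2 : ∀ x y, gt (x, -y) = -gt (x, y) := fun x y => hH2 _ _
    -- quotient-level map
    refine ⟨fun p => Quotient.liftOn₂ p.1 p.2 (fun x v => rpMk L (gt (x, v))) ?_, ?_, gt,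
      hgtc, hgt1, hgt2, fun x y => rfl⟩
    · intro x v x' v' hx hv
      rcases hx with hx | hx <;> rcases hv with hv | hv <;> rw [hx, hv]
      · show rpMk L (gt (x, v)) = rpMk L (gt (x, -v))
        rw [hgt2, Stmt15Aux.rpMk_neg]
      · show rpMk L (gt (x, v)) = rpMk L (gt (-x, v))
        rw [hgt1, Stmt15Aux.rpMk_neg]
      · show rpMk L (gt (x, v)) = rpMk L (gt (-x, -v))
        rw [hgt1, hgt2, neg_neg]
    · refine ((Stmt15Aux.isOpenQuotientMap_rpMk _).prodMap
        (Stmt15Aux.isOpenQuotientMap_rpMk _)).continuous_comp_iff.mp ?_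
      exact (continuous_quotient_mk').comp hgtc
  · rintro ⟨g, hgc, gt, hgtc, hgt1, hgt2, hgt3⟩
    set H : SphereProd n × sphere (0 : EuclideanSpace ℝ (Fin (N + 1))) 1 →
        sphere (0 : EuclideanSpace ℝ (Fin (L + 1))) 1 :=
      fun p => gt (p.1 i0, p.2) with hH
    have hHc : Continuous H :=
      hgtc.comp (((continuous_apply i0).comp continuous_fst).prodMk continuous_snd)
    have hH1 : ∀ x v, H (-x, -v) = H (x, v) := by
      intro x v
      show gt ((-x) i0, -v) = gt (x i0, v)
      have hneg : (-x) i0 = -(x i0) := rfl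
      rw [hneg, hgt1, hgt2, neg_neg]
    have hH2 : ∀ x v, H (x, -v) = -H (x, v) := fun x v => hgt2 _ _
    have hH1' : ∀ x v, H (-x, v) = -H (x, v) := by
      intro x v
      calc H (-x, v) = H (-x, -(-v)) := by rw [neg_neg]
        _ = -H (-x, -v) := hH2 _ _
        _ = -H (x, v) := by rw [hH1]
    refine ⟨fun p => Quotient.liftOn₂ p.1 p.2 (fun x v => rpMk L (H (x, v))) ?_, ?_, H,
      hHc, hH1, hH2, fun x v => rfl⟩
    · intro x v x' v' hx hv
      rcases hx with hx | hx <;> rcases hv with hv | hv <;> rw [hx, hv]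
      · show rpMk L (H (x, v)) = rpMk L (H (x, -v))
        rw [hH2, Stmt15Aux.rpMk_neg]
      · show rpMk L (H (x, v)) = rpMk L (H (-x, v))
        rw [hH1', Stmt15Aux.rpMk_neg]
      · show rpMk L (H (x, v)) = rpMk L (H (-x, -v))
        rw [hH1]
    · refine ((Stmt15Aux.isOpenQuotientMap_ppsMk n).prodMap
        (Stmt15Aux.isOpenQuotientMap_rpMk _)).continuous_comp_iff.mp ?_
      exact (continuous_quotient_mk').comp hHc


end
end

section
/- For r ≥ 2 there is a chain of inequalities TC(P^{n₁}) ≤ TC(P_{(n₁,n₂)}) ≤ ··· ≤ TC(P_{(n₁,…,n_{r-1})}) ≤ TC(P_{(n₁,…,n_r)}). -/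
noncomputable section

open unitInterval Set

open Metric

section Retract

lemma TCCover.of_retract {A X : Type*} [TopologicalSpace A] [TopologicalSpace X]
    (incl : C(A, X)) (retr : C(X, A)) (hri : ∀ a, retr (incl a) = a) {k : ℕ}
    (hX : TCCover X k) : TCCover A k := by
  obtain ⟨U, hUopen, hUcov, hUsec⟩ := hX
  refine ⟨fun i => (fun p : A × A => ((incl p.1, incl p.2) : X × X)) ⁻¹' (U i), ?_, ?_, ?_⟩
  · intro i
    exact (hUopen i).preimage (by fun_prop)
  · apply Set.eq_univ_of_forall
    intro p
    have : ((incl p.1, incl p.2) : X × X) ∈ ⋃ i, U i := by rw [hUcov]; trivial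
    obtain ⟨_, ⟨i, rfl⟩, hi⟩ := this
    exact Set.mem_iUnion.2 ⟨i, hi⟩
  · intro i
    obtain ⟨s, hs⟩ := hUsec i
    refine ⟨⟨fun v => retr.comp (s ⟨(incl v.1.1, incl v.1.2), v.2⟩), ?_⟩, ?_⟩
    · exact (ContinuousMap.continuous_postcomp retr).comp
        (s.continuous.comp (by fun_prop))
    · rintro ⟨⟨a, b⟩, hv⟩
      have := hs ⟨(incl a, incl b), hv⟩
      simp only [pathEval, Prod.mk.injEq] at this ⊢
      simp [ContinuousMap.comp_apply, this.1, this.2, hri]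

lemma topComplexity_le_of_retract {A X : Type*} [TopologicalSpace A] [TopologicalSpace X]
    (incl : C(A, X)) (retr : C(X, A)) (hri : ∀ a, retr (incl a) = a) :
    topComplexity A ≤ topComplexity X := by
  apply sInf_le_sInf
  rintro c ⟨k, hk, rfl⟩
  exact ⟨k, hk.of_retract incl retr hri, rfl⟩

end Retract

section SphereIncl

lemma sphereIncl_sum {a b : ℕ} (h : a ≤ b) (x : EuclideanSpace ℝ (Fin (a + 1))) :
    (∑ i : Fin (b + 1), ‖if hi : (i : ℕ) < a + 1 then x ⟨i, hi⟩ else 0‖ ^ 2)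
      = ∑ i : Fin (a + 1), ‖x i‖ ^ 2 := by
  have step1 : (∑ i : Fin (b + 1), ‖if hi : (i : ℕ) < a + 1 then x ⟨i, hi⟩ else 0‖ ^ 2)
      = ∑ i : Fin (b + 1), (fun m => if hm : m < a + 1 then ‖x ⟨m, hm⟩‖ ^ 2 else 0) (i : ℕ) := by
    refine Finset.sum_congr rfl fun i _ => ?_
    by_cases hi : (i : ℕ) < a + 1 <;> simp [hi]
  rw [step1, Fin.sum_univ_eq_sum_range (fun m => if hm : m < a + 1 then ‖x ⟨m, hm⟩‖ ^ 2 else 0)]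
  rw [← Finset.sum_subset (Finset.range_subset_range.2 (by omega : a + 1 ≤ b + 1))
    (fun m _ hm => dif_neg (by simpa using hm))]
  rw [← Fin.sum_univ_eq_sum_range (fun m => if hm : m < a + 1 then ‖x ⟨m, hm⟩‖ ^ 2 else 0)]
  exact Finset.sum_congr rfl fun i _ => by rw [dif_pos i.2]

def sphereIncl {a b : ℕ} (h : a ≤ b)
    (x : Metric.sphere (0 : EuclideanSpace ℝ (Fin (a + 1))) 1) :
    Metric.sphere (0 : EuclideanSpace ℝ (Fin (b + 1))) 1 :=
  ⟨WithLp.toLp 2 (fun i : Fin (b + 1) => if hi : (i : ℕ) < a + 1 then (x : EuclideanSpace ℝ (Fin (a + 1))) ⟨i, hi⟩ else 0), by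
    rw [mem_sphere_zero_iff_norm, EuclideanSpace.norm_eq]
    simp only [PiLp.toLp_apply]
    have hx : ‖(x : EuclideanSpace ℝ (Fin (a + 1)))‖ = 1 :=
      mem_sphere_zero_iff_norm.1 x.2
    rw [EuclideanSpace.norm_eq] at hx
    rw [show (∑ i : Fin (b+1), ‖if hi : (i : ℕ) < a + 1 then
        (x : EuclideanSpace ℝ (Fin (a+1))) ⟨i, hi⟩ else 0‖ ^ 2) = _ from sphereIncl_sum h _]
    exact hx⟩

lemma sphereIncl_neg {a b : ℕ} (h : a ≤ b)
    (x : Metric.sphere (0 : EuclideanSpace ℝ (Fin (a + 1))) 1) :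
    sphereIncl h (-x) = -sphereIncl h x := by
  apply Subtype.ext
  rw [coe_neg_sphere]
  refine PiLp.ext fun i => ?_
  show (if hi : (i : ℕ) < a + 1 then
      ((-x : Metric.sphere _ _) : EuclideanSpace ℝ (Fin (a+1))) ⟨i, hi⟩ else 0) = _
  rw [coe_neg_sphere]
  show _ = -(if hi : (i : ℕ) < a + 1 then (x : EuclideanSpace ℝ (Fin (a+1))) ⟨i, hi⟩ else 0)
  by_cases hi : (i : ℕ) < a + 1
  · rw [dif_pos hi, dif_pos hi]; rfl
  · rw [dif_neg hi, dif_neg hi, neg_zero]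

lemma sphereIncl_continuous {a b : ℕ} (h : a ≤ b) : Continuous (sphereIncl h) := by
  apply Continuous.subtype_mk
  refine (PiLp.continuous_toLp 2 _).comp ?_
  apply continuous_pi
  intro i
  by_cases hi : (i : ℕ) < a + 1
  · simp only [dif_pos hi]
    exact (continuous_apply _).comp ((PiLp.continuous_ofLp 2 _).comp continuous_subtype_val)
  · simp only [dif_neg hi]
    exact continuous_const

end SphereIncl

section PPSMaps

/-- A `ℤ/2`-equivariant map of sphere products descends to projective product spaces. -/
def ppsMap {r s : ℕ} {n : Fin r → ℕ} {m : Fin s → ℕ} (f : SphereProd n → SphereProd m)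
    (hf : ∀ x, f (-x) = -f x) : PPS n → PPS m :=
  Quotient.lift (fun x => ppsMk m (f x)) (by
    intro a b hab
    rcases hab with rfl | rfl
    · rfl
    · exact Quotient.sound (Or.inr (hf a)))

lemma ppsMap_mk {r s : ℕ} {n : Fin r → ℕ} {m : Fin s → ℕ} (f : SphereProd n → SphereProd m)
    (hf : ∀ x, f (-x) = -f x) (x : SphereProd n) :
    ppsMap f hf (ppsMk n x) = ppsMk m (f x) := rfl

lemma ppsMap_continuous {r s : ℕ} {n : Fin r → ℕ} {m : Fin s → ℕ}
    (f : SphereProd n → SphereProd m) (hf : ∀ x, f (-x) = -f x) (hc : Continuous f) :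
    Continuous (ppsMap f hf) :=
  Continuous.quotient_lift (continuous_quotient_mk'.comp hc) _

end PPSMaps

/-- For `n̄ = (n₁,…,n_r)` with `n₁ ≤ ⋯ ≤ n_r`, there is a chain of inequalities
`TC(P^{n₁}) ≤ TC(P_{(n₁,n₂)}) ≤ ⋯ ≤ TC(P_{(n₁,…,n_r)})`: the topological complexity of
each truncated projective product space is at most that of the next one. -/
theorem stmt17 (r : ℕ) (hr : 2 ≤ r) (n : Fin r → ℕ)
    (hpos : ∀ i, 1 ≤ n i) (hmono : Monotone n) :
    ∀ j : ℕ, 1 ≤ j → ∀ h : j < r,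
      topComplexity (PPS fun i : Fin j => n (Fin.castLE (by omega) i)) ≤
        topComplexity (PPS fun i : Fin (j + 1) => n (Fin.castLE (by omega) i)) := by
  intro j hj h
  have hj1r : j + 1 ≤ r := h
  have hjr : j ≤ r := by omega
  have h0j : 0 < j := hj
  set N : Fin j → ℕ := fun i => n (Fin.castLE hjr i) with hN
  set M : Fin (j + 1) → ℕ := fun i => n (Fin.castLE hj1r i) with hM
  have hle : ∀ i : Fin (j + 1), N ⟨0, h0j⟩ ≤ M i := fun i =>
    hmono (by simp [Fin.le_def])
  -- the projection forgetting the last sphere coordinate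
  let projMap : SphereProd M → SphereProd N := fun x i => x (Fin.castLE (Nat.le_succ j) i)
  have hproj_neg : ∀ x, projMap (-x) = -projMap x := fun x => rfl
  have hproj_cont : Continuous projMap := continuous_pi fun i => continuous_apply _
  -- the equivariant section, repeating (an inclusion of) the first coordinate
  let secMap : SphereProd N → SphereProd M := fun x i =>
    if hi : (i : ℕ) < j then x ⟨i, hi⟩ else sphereIncl (hle i) (x ⟨0, h0j⟩)
  have hsec_neg : ∀ x, secMap (-x) = -secMap x := by
    intro x
    funext i
    show (if hi : (i : ℕ) < j then (-x) ⟨i, hi⟩ else sphereIncl (hle i) ((-x) ⟨0, h0j⟩))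
      = -(if hi : (i : ℕ) < j then x ⟨i, hi⟩ else sphereIncl (hle i) (x ⟨0, h0j⟩))
    by_cases hi : (i : ℕ) < j
    · rw [dif_pos hi, dif_pos hi]; rfl
    · rw [dif_neg hi, dif_neg hi]
      exact sphereIncl_neg (hle i) (x ⟨0, h0j⟩)
  have hsec_cont : Continuous secMap := by
    apply continuous_pi
    intro i
    show Continuous fun x : SphereProd N =>
      if hi : (i : ℕ) < j then x ⟨i, hi⟩ else sphereIncl (hle i) (x ⟨0, h0j⟩)
    by_cases hi : (i : ℕ) < j
    · simp only [dif_pos hi]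
      exact continuous_apply _
    · simp only [dif_neg hi]
      exact (sphereIncl_continuous (hle i)).comp (continuous_apply _)
  have hretr : ∀ q : PPS N, ppsMap projMap hproj_neg (ppsMap secMap hsec_neg q) = q := by
    refine Quotient.ind (fun x => ?_)
    show ppsMk N (projMap (secMap x)) = ppsMk N x
    refine congrArg (ppsMk N) (funext fun i => ?_)
    show (if hi : ((Fin.castLE (Nat.le_succ j) i : Fin (j + 1)) : ℕ) < j
        then x ⟨((Fin.castLE (Nat.le_succ j) i : Fin (j + 1)) : ℕ), hi⟩
        else sphereIncl (hle _) (x ⟨0, h0j⟩)) = x i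
    exact dif_pos i.2
  exact topComplexity_le_of_retract
    ⟨ppsMap secMap hsec_neg, ppsMap_continuous _ _ hsec_cont⟩
    ⟨ppsMap projMap hproj_neg, ppsMap_continuous _ _ hproj_cont⟩
    hretr
end
end
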